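/- arXiv:2101.02953 — 4 statements merged into one kernel-verified Lean document; each statement's English description precedes it below -/
import Mathlib

section
/- For any integers c and d, the q-deformed matrices satisfy M_q(c,1,d) = q·M_q(c-1,d-1), where M_q(c₁,…,c_k) is the product of matrices [[ [c_i]_q, -q^{c_i-1}],[1,0]] for i = 1,…,k, and [c]_q = (1-q^c)/(1-q) for any integer c. -/
open LaurentPolynomial

/-- The `q`-integer `[c]_q = (1-q^c)/(1-q)` for an arbitrary integer `c`:
`[c]_q = 1+q+⋯+q^{c-1}` for `c ≥ 0` and `[-n]_q = -q^{-1}-⋯-q^{-n}` for `n > 0`. -/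
noncomputable def qInt (c : ℤ) : LaurentPolynomial ℤ :=
  if 0 ≤ c then ∑ i ∈ Finset.range c.toNat, T (i : ℤ)
  else -∑ i ∈ Finset.range (-c).toNat, T (-(i + 1) : ℤ)

/-- `M_q(c₁,…,c_k) = ∏ᵢ [[ [cᵢ]_q, -q^{cᵢ-1}],[1,0]]` over `ℤ[q,q^{-1}]`. -/
noncomputable def Mq (l : List ℤ) : Matrix (Fin 2) (Fin 2) (LaurentPolynomial ℤ) :=
  (l.map fun c => !![qInt c, -T (c - 1); 1, 0]).prod

lemma qInt_nonpos (c : ℤ) (h : c ≤ 0) :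
    qInt c = -∑ i ∈ Finset.range (-c).toNat, T (-(i + 1) : ℤ) := by
  rcases eq_or_lt_of_le h with rfl | h
  · simp [qInt]
  · rw [qInt, if_neg (by omega)]

lemma qInt_add_one (c : ℤ) : qInt (c + 1) = qInt c + T c := by
  rcases le_or_gt 0 c with h | h
  · rw [qInt, qInt, if_pos (by omega), if_pos h]
    have h1 : (c + 1).toNat = c.toNat + 1 := by omega
    rw [h1, Finset.sum_range_succ, Int.toNat_of_nonneg h]
  · rw [qInt_nonpos c h.le, qInt_nonpos (c + 1) (by omega)]
    have h1 : (-c).toNat = (-(c + 1)).toNat + 1 := by omega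
    rw [h1, Finset.sum_range_succ]
    have h2 : (-(((-(c + 1)).toNat : ℤ) + 1)) = c := by omega
    rw [h2]; ring

lemma qInt_add_one' (c : ℤ) : qInt (c + 1) = 1 + T 1 * qInt c := by
  rcases le_or_gt 0 c with h | h
  · rw [qInt, qInt, if_pos (by omega), if_pos h]
    have h1 : (c + 1).toNat = c.toNat + 1 := by omega
    rw [h1, Finset.sum_range_succ', Finset.mul_sum]
    simp only [Int.natCast_zero, T_zero]
    rw [add_comm]
    congr 1
    refine Finset.sum_congr rfl fun i _ => ?_
    rw [show ((i + 1 : ℕ) : ℤ) = 1 + (i : ℤ) by push_cast; ring, T_add]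
  · rw [qInt_nonpos c h.le, qInt_nonpos (c + 1) (by omega)]
    have h1 : (-c).toNat = (-(c + 1)).toNat + 1 := by omega
    rw [h1, mul_neg, Finset.mul_sum]
    have h2 : ∀ i : ℕ, T 1 * T (-(i + 1) : ℤ) = (T (-(i : ℤ)) : LaurentPolynomial ℤ) := by
      intro i
      have := (T_add (R := ℤ) 1 (-((i : ℤ) + 1)))
      rw [show (1 : ℤ) + -((i : ℤ) + 1) = -(i : ℤ) by ring] at this
      exact this.symm
    simp only [h2]
    rw [Finset.sum_range_succ']
    push_cast
    simp only [neg_zero, T_zero]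
    ring

lemma qInt_one : qInt 1 = 1 := by
  simp [qInt]


/-- `M_q(c,1,d) = q·M_q(c-1,d-1)` for all integers `c, d`. -/
theorem Mq_reduction_one (c d : ℤ) :
    Mq [c, 1, d] = (T 1 : LaurentPolynomial ℤ) • Mq [c - 1, d - 1] := by
  have hc1 : qInt c = qInt (c - 1) + T (c - 1) := by
    have := qInt_add_one (c - 1); rwa [sub_add_cancel] at this
  have hd2 : qInt d = 1 + T 1 * qInt (d - 1) := by
    have := qInt_add_one' (d - 1); rwa [sub_add_cancel] at this
  have hTc : (T (c - 1) : LaurentPolynomial ℤ) = T 1 * T (c - 1 - 1) := by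
    have := T_add (R := ℤ) 1 (c - 1 - 1)
    rw [show (1 : ℤ) + (c - 1 - 1) = c - 1 by ring] at this
    exact this
  have hTd : (T (d - 1) : LaurentPolynomial ℤ) = T 1 * T (d - 1 - 1) := by
    have := T_add (R := ℤ) 1 (d - 1 - 1)
    rw [show (1 : ℤ) + (d - 1 - 1) = d - 1 by ring] at this
    exact this
  simp only [Mq, List.map_cons, List.map_nil, List.prod_cons, List.prod_nil, mul_one,
    qInt_one, sub_self, T_zero, Matrix.mul_fin_two]
  refine Matrix.ext fun i j => ?_
  rw [Matrix.smul_apply, smul_eq_mul]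
  fin_cases i <;> fin_cases j
  all_goals
    simp only [Fin.zero_eta, Fin.mk_one, Matrix.of_apply, Matrix.cons_val', Matrix.cons_val_zero, Matrix.cons_val_one, Matrix.head_cons,
      Matrix.empty_val', Matrix.cons_val_fin_one, Matrix.head_fin_const]
  · linear_combination hd2 * (qInt c - T (c - 1)) + hc1 * (T 1 * qInt (d - 1)) - hTc
  · linear_combination (-T (d - 1)) * hc1 + (-qInt (c - 1)) * hTd
  · linear_combination hd2
  · linear_combination -hTd
end

section
/- For any integers c and d, the q-deformed matrices satisfy M_q(c,-1,d) = -q^{-2}·M_q(c+1,d+1). -/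
open LaurentPolynomial

lemma qInt_neg_one : qInt (-1) = -T (-1) := by
  simp [qInt]

lemma qInt_mul_one_sub (c : ℤ) : qInt c * (1 - T 1) = 1 - T c := by
  rcases le_or_gt 0 c with h | h
  · rw [qInt, if_pos h, Finset.sum_mul]
    have key : ∀ i ∈ Finset.range c.toNat, T (i:ℤ) * (1 - T 1) =
        (T (((i:ℕ):ℤ)) : LaurentPolynomial ℤ) - T ((((i+1:ℕ)):ℤ)) := by
      intro i _
      push_cast
      rw [mul_sub, mul_one, ← T_add]
    rw [Finset.sum_congr rfl key, Finset.sum_range_sub' (fun i : ℕ => (T ((i:ℤ)) : LaurentPolynomial ℤ))]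
    simp [Int.toNat_of_nonneg h]
  · rw [qInt, if_neg (not_le.mpr h), neg_mul, Finset.sum_mul]
    have key : ∀ i ∈ Finset.range (-c).toNat, T (-(i+1):ℤ) * (1 - T 1) =
        (fun i : ℕ => (T (-(i:ℤ)) : LaurentPolynomial ℤ)) (i+1)
          - (fun i : ℕ => (T (-(i:ℤ)) : LaurentPolynomial ℤ)) i := by
      intro i _
      simp only
      push_cast
      rw [mul_sub, mul_one, ← T_add]
      ring_nf
    rw [Finset.sum_congr rfl key,
      Finset.sum_range_sub (fun i : ℕ => (T (-(i:ℤ)) : LaurentPolynomial ℤ))]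
    have hc : ((-c).toNat : ℤ) = -c := Int.toNat_of_nonneg (by omega)
    rw [hc]
    simp only [neg_neg, Nat.cast_zero, neg_zero, T_zero]
    ring

/-- `M_q(c,-1,d) = -q^{-2}·M_q(c+1,d+1)` for all integers `c, d`. -/
theorem Mq_reduction_negone (c d : ℤ) :
    Mq [c, -1, d] = -((T (-2) : LaurentPolynomial ℤ) • Mq [c + 1, d + 1]) := by
  have hx := qInt_mul_one_sub c
  have hy := qInt_mul_one_sub d
  have hcx := qInt_add_one c
  have hcy := qInt_add_one d
  simp only [Mq, List.map, List.prod_cons, List.prod_nil, mul_one,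
    Matrix.mul_fin_two, qInt_neg_one, hcx, hcy]
  have h4 : (T 1 : LaurentPolynomial ℤ) * T (-1) = 1 := by
    rw [← T_add]; norm_num
  have e2 : (T (-2) : LaurentPolynomial ℤ) = T (-1) * T (-1) := by
    rw [← T_add]; norm_num
  have ec : (T (c - 1) : LaurentPolynomial ℤ) = T c * T (-1) := by
    rw [← T_add, sub_eq_add_neg]
  have ed : (T (d - 1) : LaurentPolynomial ℤ) = T d * T (-1) := by
    rw [← T_add, sub_eq_add_neg]
  refine Matrix.ext fun i j => ?_
  fin_cases i <;> fin_cases j <;>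
    simp only [Fin.zero_eta, Fin.mk_one, Matrix.neg_apply, Matrix.smul_apply, Matrix.of_apply,
      Matrix.cons_val', Matrix.cons_val_zero, Matrix.cons_val_one, Matrix.head_cons,
      Matrix.head_fin_const, Matrix.empty_val', Matrix.cons_val_fin_one, smul_eq_mul, mul_zero,
      zero_mul, add_zero, one_mul, mul_one, neg_zero, add_sub_cancel_right,
      show ((-1:ℤ)-1 = -2) from rfl, e2, ec, ed]
  · linear_combination (T (-1) * (qInt c * qInt d + qInt d * T c)) * h4
      + (T (-1) * T (-1) * (qInt c + T c)) * hy
  · ring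
  · linear_combination (qInt d * T (-1)) * h4 + (T (-1) * T (-1)) * hy
  · ring
end

section
/- For any sequence of integers c₁,…,c_k, Tr M_q(c₁,c₂,…,c_k) = Tr M_q(c_k,c_{k-1},…,c₁), i.e. the trace of the q-deformed continued fraction matrix is invariant under reversal of the coefficient sequence. -/
open LaurentPolynomial

/-!
One symmetric matrix `S` with `det S ≠ 0` satisfies `S A = Aᵀ S` for every factor
`A = [[ [c]_q, -q^{c-1}],[1,0]]`. Hence `S M_q(c₁,…,c_k) = A₁ᵀ ⋯ A_kᵀ S = M_q(c_k,…,c₁)ᵀ S`,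
and since `det S` is not a zero divisor, multiplying by the adjugate of `S` shows that `S X = Y S`
forces `Tr X = Tr Y`.
-/

theorem SemiconjBy.list_prod_map {M ι : Type*} [Monoid M] {a : M} {f g : ι → M} (l : List ι)
    (h : ∀ i ∈ l, SemiconjBy a (f i) (g i)) : SemiconjBy a (l.map f).prod (l.map g).prod := by
  induction l with
  | nil => exact SemiconjBy.one_right a
  | cons i l ih =>
    simp only [List.map_cons, List.prod_cons]
    exact (h i List.mem_cons_self).mul_right (ih fun j hj => h j (List.mem_cons_of_mem i hj))

namespace Matrix

theorem trace_eq_of_semiconjBy {n R : Type*} [Fintype n] [DecidableEq n] [CommRing R]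
    {S A B : Matrix n n R} (hS : S.det ∈ nonZeroDivisors R) (h : SemiconjBy S A B) :
    A.trace = B.trace := by
  refine (mul_cancel_left_mem_nonZeroDivisors hS).mp ?_
  calc S.det * A.trace = (S.adjugate * (S * A)).trace := by
        rw [← mul_assoc, adjugate_mul, smul_mul, one_mul, trace_smul, smul_eq_mul]
    _ = (S * S.adjugate * B).trace := by rw [h.eq, ← mul_assoc, trace_mul_cycle]
    _ = S.det * B.trace := by rw [mul_adjugate, smul_mul, one_mul, trace_smul, smul_eq_mul]

end Matrix

theorem LaurentPolynomial.one_sub_T_one_mul_T {R : Type*} [Ring R] (n : ℤ) :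
    (1 - T 1 : LaurentPolynomial R) * T n = T n - T (n + 1) := by
  rw [sub_mul, one_mul, ← T_add, add_comm 1]

theorem one_sub_T_one_mul_qInt (c : ℤ) : (1 - T 1) * qInt c = 1 - T c := by
  unfold qInt
  split_ifs with hc
  · obtain ⟨n, rfl⟩ := Int.eq_ofNat_of_zero_le hc
    rw [Int.toNat_natCast, Finset.mul_sum]
    simp_rw [one_sub_T_one_mul_T]
    exact_mod_cast Finset.sum_range_sub' (fun i : ℕ => (T i : LaurentPolynomial ℤ)) n
  · obtain ⟨n, rfl⟩ := Int.exists_eq_neg_ofNat (le_of_not_ge hc)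
    have step (i : ℕ) : (1 - T 1 : LaurentPolynomial ℤ) * T (-(i + 1) : ℤ) =
        T (-((i + 1 : ℕ) : ℤ)) - T (-(i : ℤ)) := by
      rw [one_sub_T_one_mul_T]; push_cast; ring_nf
    rw [neg_neg, Int.toNat_natCast, mul_neg, Finset.mul_sum]
    simp_rw [step]
    rw [Finset.sum_range_sub (fun i : ℕ => (T (-i) : LaurentPolynomial ℤ)) n, Nat.cast_zero,
      neg_zero, T_zero, neg_sub]

open Matrix

noncomputable def MqFactor (c : ℤ) : Matrix (Fin 2) (Fin 2) (LaurentPolynomial ℤ) :=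
  !![qInt c, -T (c - 1); 1, 0]

theorem Mq_eq_prod_map_MqFactor (l : List ℤ) : Mq l = (l.map MqFactor).prod := rfl

theorem transpose_Mq_reverse (l : List ℤ) :
    (Mq l.reverse)ᵀ = (l.map fun c => (MqFactor c)ᵀ).prod := by
  rw [Mq_eq_prod_map_MqFactor, transpose_list_prod, List.map_reverse, List.map_reverse,
    List.reverse_reverse, List.map_map]
  rfl

/-- Up to a scalar, the only symmetric `S` with `S * A = Aᵀ * S` for all factors `A`: this
amounts to `q · q^{c-1} + (1 - q) [c]_q - 1 = 0`. -/
noncomputable def MqTransposer : Matrix (Fin 2) (Fin 2) (LaurentPolynomial ℤ) :=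
  !![T 1, 1 - T 1; 1 - T 1, -1]

theorem det_MqTransposer : MqTransposer.det = T 1 - T 2 - 1 := by
  rw [MqTransposer, det_fin_two_of, show (2 : ℤ) = 1 + 1 from rfl, T_add]
  ring

theorem det_MqTransposer_ne_zero : MqTransposer.det ≠ 0 := by
  rw [det_MqTransposer]
  intro h
  have := congrArg (fun f : LaurentPolynomial ℤ => f.coeff 0) h
  simp only [T, AddMonoidAlgebra.coeff_sub, AddMonoidAlgebra.coeff_single] at this
  simp at this

theorem semiconjBy_MqTransposer_MqFactor (c : ℤ) : SemiconjBy MqTransposer (MqFactor c) (MqFactor c)ᵀ := by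
  have hq := one_sub_T_one_mul_qInt c
  have hT : T 1 * T (c - 1) = (T c : LaurentPolynomial ℤ) := by rw [← T_add, add_sub_cancel]
  have ht : (MqFactor c)ᵀ = !![qInt c, 1; -T (c - 1), 0] := by
    ext i j; fin_cases i <;> fin_cases j <;> rfl
  rw [SemiconjBy, ht, MqTransposer, MqFactor, mul_fin_two, mul_fin_two]
  refine Matrix.ext fun i j => ?_
  fin_cases i <;> fin_cases j <;> dsimp
  · ring
  · linear_combination -hT - hq
  · linear_combination hq + hT
  · ring

theorem semiconjBy_MqTransposer_Mq (l : List ℤ) : SemiconjBy MqTransposer (Mq l) (Mq l.reverse)ᵀ := by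
  rw [transpose_Mq_reverse]
  exact SemiconjBy.list_prod_map l fun c _ => semiconjBy_MqTransposer_MqFactor c

/-- `Tr M_q(c₁,…,c_k) = Tr M_q(c_k,…,c₁)`: the trace of the `q`-deformed
continued fraction matrix is invariant under reversal of the coefficients. -/
theorem trace_Mq_reverse (l : List ℤ) :
    (Mq l).trace = (Mq l.reverse).trace :=
  (trace_eq_of_semiconjBy (mem_nonZeroDivisors_of_ne_zero det_MqTransposer_ne_zero)
    (semiconjBy_MqTransposer_Mq l)).trans (trace_transpose _)
end

section
/- For any sequence of integers c₁,…,c_k, Tr M_q(c₁,…,c_k) = q^{∑_{i=1}^{k}(c_i-1)} · Tr M_{q^{-1}}(c₁,…,c_k), i.e. the trace is a palindromic Laurent polynomial. -/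
open LaurentPolynomial

open Matrix

lemma Tmul (a b : ℤ) : (T a : LaurentPolynomial ℤ) * T b = T (a+b) := (T_add a b).symm

lemma geom (n : ℕ) : (T 1 - 1) * ∑ i ∈ Finset.range n, (T (i:ℤ) : LaurentPolynomial ℤ) = T (n:ℤ) - 1 := by
  induction n with
  | zero => simp
  | succ n ih =>
    rw [Finset.sum_range_succ, mul_add, ih]
    have h : (T 1 : LaurentPolynomial ℤ) * T (n:ℤ) = T ((n:ℤ)+1) := by rw [Tmul]; ring_nf
    push_cast
    linear_combination h

lemma geom' (n : ℕ) : (T 1 - 1) * ∑ i ∈ Finset.range n, (T (-(i+1):ℤ) : LaurentPolynomial ℤ) = 1 - T (-n:ℤ) := by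
  induction n with
  | zero => simp
  | succ n ih =>
    rw [Finset.sum_range_succ, mul_add, ih]
    have h : (T 1 : LaurentPolynomial ℤ) * T (-((n:ℤ)+1)) = T (-(n:ℤ)) := by rw [Tmul]; ring_nf
    push_cast
    linear_combination h

lemma L1 (c : ℤ) : (T 1 - 1) * qInt c = T c - 1 := by
  unfold qInt
  split_ifs with h
  · rw [geom, Int.toNat_of_nonneg h]
  · rw [mul_neg, geom', Int.toNat_of_nonneg (by omega : (0:ℤ) ≤ -c), neg_neg]
    ring

example : NoZeroDivisors (LaurentPolynomial ℤ) := inferInstance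

lemma T1_ne : (T 1 - 1 : LaurentPolynomial ℤ) ≠ 0 := by
  have : (T 1 - 1 : LaurentPolynomial ℤ) = Polynomial.toLaurent (Polynomial.X - 1) := by
    simp [Polynomial.toLaurent_X]
  rw [this, Polynomial.toLaurent_ne_zero]
  intro h
  have := congrArg (Polynomial.eval 0) h
  simp at this

lemma Tm1_ne : (T (-1) - 1 : LaurentPolynomial ℤ) ≠ 0 := by
  intro h
  apply T1_ne
  have : ((T (-1) - 1) * T 1 : LaurentPolynomial ℤ) = -(T 1 - 1) := by
    rw [sub_mul, Tmul]; simp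
  rw [h, zero_mul] at this
  rw [← neg_eq_zero, ← this]

lemma L2 (c : ℤ) : invert (qInt c) = T (1 - c) * qInt c := by
  apply mul_left_cancel₀ Tm1_ne
  have h1 : invert ((T 1 - 1) * qInt c) = (T (-1) - 1) * invert (qInt c) := by
    rw [_root_.map_mul]; simp
  have h2 := congrArg invert (L1 c)
  rw [h1] at h2
  simp only [map_sub, invert_T, _root_.map_one] at h2
  rw [h2]
  symm
  have h3 : (T (-1) - 1 : LaurentPolynomial ℤ) * T (1 - c) = -T (-c) * (T 1 - 1) := by
    rw [sub_mul, Tmul, neg_mul, mul_sub, Tmul]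
    ring_nf
  calc (T (-1) - 1) * (T (1-c) * qInt c) = (-T (-c) * (T 1 - 1)) * qInt c := by rw [← h3]; ring
    _ = -T (-c) * (T c - 1) := by rw [mul_assoc, L1]
    _ = T (-c) - T (-c) * T c := by ring
    _ = T (-c) - 1 := by rw [Tmul]; simp

lemma hn (c : ℤ) : T (c-1) = T (-1) + (1 - T (-1)) * qInt c := by
  have h := L1 c
  have e1 : (T (-1) : LaurentPolynomial ℤ) * T 1 = 1 := by rw [Tmul]; norm_num
  have e2 : (T (-1) : LaurentPolynomial ℤ) * T c = T (c-1) := by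
    rw [Tmul, show (-1 + c) = c - 1 from by ring]
  linear_combination (-(T (-1))) * h + qInt c * e1 - e2

noncomputable def Aq (c : ℤ) : Matrix (Fin 2) (Fin 2) (LaurentPolynomial ℤ) :=
  !![qInt c, -T (c - 1); 1, 0]

noncomputable def EE : Matrix (Fin 2) (Fin 2) (LaurentPolynomial ℤ) :=
  !![1 - T (-1), T (-1); 1, T (-1) - 1]

lemma Mq_nil : Mq [] = 1 := rfl

lemma Mq_cons (c : ℤ) (l : List ℤ) : Mq (c :: l) = Aq c * Mq l := by
  simp [Mq, Aq]

lemma Mq_append (l : List ℤ) (c : ℤ) : Mq (l ++ [c]) = Mq l * Aq c := by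
  simp [Mq, Aq]

lemma key (l : List ℤ) : ∃ δ : LaurentPolynomial ℤ,
    Mq l.reverse = Mq l + δ • EE ∧
    (1 - T (-1)) * (Mq l 1 1 - Mq l 0 0) - Mq l 0 1 - T (-1) * Mq l 1 0
      = (1 - T (-1) + T (-1)^2) * δ := by
  induction l with
  | nil =>
    refine ⟨0, by simp [Mq_nil], ?_⟩
    simp [Mq_nil, Matrix.one_apply]
  | cons a l ih =>
    obtain ⟨δ, hM, hD⟩ := ih
    obtain ⟨x, y, z, w, hX⟩ : ∃ x y z w, Mq l = !![x, y; z, w] :=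
      ⟨_, _, _, _, Matrix.eta_fin_two _⟩
    rw [hX] at hM hD
    simp at hD
    have hv : (T (-1) : LaurentPolynomial ℤ)^2 = T (-2) := by rw [sq, Tmul]; norm_num
    refine ⟨qInt a * (z + δ) + (w - x) + δ * (T (-1) - 1), ?_, ?_⟩
    · rw [List.reverse_cons, Mq_append, Mq_cons, hM, hX, Aq, hn a, EE]
      refine Matrix.ext fun i j => ?_
      fin_cases i <;> fin_cases j <;>
        simp [Matrix.mul_apply, Fin.sum_univ_two, Matrix.add_apply, Matrix.smul_apply,
          smul_eq_mul]
      · linear_combination -hD + δ * hv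
      · linear_combination qInt a * hD - qInt a * δ * hv
      · ring
      · linear_combination hD - δ * hv
    · rw [Mq_cons, hX, Aq, hn a]
      simp [Matrix.mul_apply, Fin.sum_univ_two]
      linear_combination (qInt a + T (-1) - 1) * hD + (qInt a * z + w - x) * hv

lemma trace_reverse (l : List ℤ) : (Mq l.reverse).trace = (Mq l).trace := by
  obtain ⟨δ, hM, -⟩ := key l
  rw [hM, Matrix.trace_add, Matrix.trace_smul]
  have : EE.trace = 0 := by simp [EE, Matrix.trace_fin_two]
  rw [this]
  simp

noncomputable def Dg : Matrix (Fin 2) (Fin 2) (LaurentPolynomial ℤ) := !![1, 0; 0, -1]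

lemma Dg_sq : Dg * Dg = 1 := by
  rw [Dg]
  norm_num [Matrix.mul_fin_two]
  exact Matrix.one_fin_two.symm

lemma map_mul_invert (A B : Matrix (Fin 2) (Fin 2) (LaurentPolynomial ℤ)) :
    (A * B).map ⇑invert = A.map ⇑invert * B.map ⇑invert := by
  ext i j
  simp [Matrix.map_apply, Matrix.mul_apply, map_sum]

lemma t2 (a b c d : LaurentPolynomial ℤ) : (!![a, b; c, d])ᵀ = !![a, c; b, d] := by
  refine Matrix.ext fun i j => ?_
  fin_cases i <;> fin_cases j <;> simp

lemma s2 (r a b c d : LaurentPolynomial ℤ) :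
    r • !![a, b; c, d] = !![r * a, r * b; r * c, r * d] := by
  refine Matrix.ext fun i j => ?_
  fin_cases i <;> fin_cases j <;> simp [Matrix.smul_apply]

lemma map2 (a b c d : LaurentPolynomial ℤ) :
    (!![a, b; c, d]).map ⇑invert = !![invert a, invert b; invert c, invert d] := by
  refine Matrix.ext fun i j => ?_
  fin_cases i <;> fin_cases j <;> simp [Matrix.map_apply]

set_option maxRecDepth 10000 in
lemma B_eq (c : ℤ) : (T (c - 1) : LaurentPolynomial ℤ) • (Aq c).map ⇑invert
    = Dg * (Aq c)ᵀ * Dg := by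
  have h1 : (T (c-1) : LaurentPolynomial ℤ) * T (1-c) = 1 := by
    rw [Tmul, show (c - 1 + (1 - c)) = 0 from by ring, T_zero]
  have h2 : (T (c-1) : LaurentPolynomial ℤ) * invert (qInt c) = qInt c := by
    rw [L2, ← mul_assoc, h1, one_mul]
  rw [Aq, map2, t2, Dg, Matrix.mul_fin_two, Matrix.mul_fin_two, s2]
  have h3 : invert (-T (c-1) : LaurentPolynomial ℤ) = -T (1-c) := by
    rw [map_neg, invert_T, show (-(c-1)) = 1 - c from by ring]
  rw [h3]
  simp only [_root_.map_one, map_zero]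
  rw [h2, show (T (c-1) * -T (1-c) : LaurentPolynomial ℤ) = -1 from by rw [mul_neg, h1]]
  norm_num

lemma invert_Mq (l : List ℤ) :
    (T ((l.map fun c => c - 1).sum) : LaurentPolynomial ℤ) • (Mq l).map ⇑invert
      = Dg * (Mq l.reverse)ᵀ * Dg := by
  induction l with
  | nil =>
    have h1 : ((1 : Matrix (Fin 2) (Fin 2) (LaurentPolynomial ℤ))).map ⇑invert = 1 :=
      Matrix.map_one _ (map_zero _) (_root_.map_one _)
    simp [Mq_nil, h1, Matrix.transpose_one, Dg_sq]
  | cons a l ih =>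
    have hDD : ∀ X : Matrix (Fin 2) (Fin 2) (LaurentPolynomial ℤ), Dg * (Dg * X) = X :=
      fun X => by rw [← Matrix.mul_assoc, Dg_sq, Matrix.one_mul]
    rw [Mq_cons, map_mul_invert, List.map_cons, List.sum_cons, T_add,
      ← smul_mul_smul_comm, B_eq, ih, List.reverse_cons, Mq_append, Matrix.transpose_mul]
    simp only [Matrix.mul_assoc]
    rw [hDD]

/-- `Tr M_q(c₁,…,c_k) = q^{∑(cᵢ-1)} · Tr M_{q^{-1}}(c₁,…,c_k)`:
the trace is a palindromic Laurent polynomial (here `M_{q^{-1}}` is obtained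
by the substitution `q ↦ q^{-1}`, i.e. by `LaurentPolynomial.invert`). -/
theorem trace_Mq_palindrome (l : List ℤ) :
    (Mq l).trace =
      T ((l.map fun c => c - 1).sum) * invert ((Mq l).trace) := by
  have h := congrArg Matrix.trace (invert_Mq l)
  rw [Matrix.trace_smul] at h
  have hmap : ((Mq l).map ⇑invert).trace = invert ((Mq l).trace) := by
    rw [Matrix.trace_fin_two, Matrix.trace_fin_two, Matrix.map_apply, Matrix.map_apply,
      _root_.map_add]
  rw [hmap, smul_eq_mul] at h
  rw [h, Matrix.trace_mul_comm (Dg * (Mq l.reverse)ᵀ) Dg, ← Matrix.mul_assoc, Dg_sq,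
    Matrix.one_mul, Matrix.trace_transpose, trace_reverse]
end
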